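/- Let μ be a finite Borel measure on Γ, g bounded measurable with 0 < g < 1, and u₀ : Γ → [0,∞) with μ({u₀ > 0}) > 0. Set λ₀ := ⨍_{{u₀>0}} g dμ and Λ := sup { ⨍_A g dμ : {u₀ > 0} ⊆ A }. If μ({u₀ = 0} ∩ {g > λ₀}) > 0, then Λ > λ₀, and the maximizing set A* := {u₀ > 0} ∪ {g ≥ Λ} satisfies μ(A* \ {u₀ > 0}) > 0. -/

import Mathlib

/-!
Adding to `S = {u₀ > 0}` the set `T = {u₀ = 0} ∩ {g > λ₀}`, on which `g` exceeds the average `λ₀`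
over `S`, raises the average, so `Λ > λ₀`. If `{g ≥ Λ} \ S` were null, every admissible `A ⊇ S`
would only add points where `g < Λ`, and then `⨍_A g ≤ Λ - μ(S)(Λ - λ₀)/μ(Γ)`: a gap below `Λ`
that is uniform in `A`, contradicting the definition of `Λ` as a supremum.
-/

open Set MeasureTheory

noncomputable def lambdaSup {Γ : Type*} [MeasurableSpace Γ]
    (μ : MeasureTheory.Measure Γ) (g : Γ → ℝ) (S : Set Γ) : ℝ :=
  sSup {r : ℝ | ∃ A : Set Γ, MeasurableSet A ∧ S ⊆ A ∧ r = ⨍ x in A, g x ∂μ}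

namespace MeasureTheory

variable {α : Type*} [MeasurableSpace α] {μ : Measure α} {f : α → ℝ} {s t : Set α} {c : ℝ}

lemma lt_setAverage_of_forall_lt (ht₀ : μ t ≠ 0) (htμ : μ t ≠ ⊤) (hf : IntegrableOn f t μ)
    (h : ∀ x ∈ t, c < f x) : c < ⨍ x in t, f x ∂μ := by
  obtain ⟨x, hxt, hx⟩ := exists_le_setAverage ht₀ htμ hf
  exact (h x hxt).trans_le hx

lemma setAverage_le_of_forall_le (hc : 0 ≤ c) (hsμ : μ s ≠ ⊤) (hf : IntegrableOn f s μ)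
    (h : ∀ x ∈ s, f x ≤ c) : ⨍ x in s, f x ∂μ ≤ c := by
  by_cases hs₀ : μ s = 0
  · simpa [Measure.restrict_eq_zero.2 hs₀] using hc
  · obtain ⟨x, hxs, hx⟩ := exists_setAverage_le hs₀ hsμ hf
    exact hx.trans (h x hxs)

lemma setAverage_lt_setAverage_union (hd : Disjoint s t) (ht : MeasurableSet t)
    (hs₀ : μ s ≠ 0) (ht₀ : μ t ≠ 0) (hsμ : μ s ≠ ⊤) (htμ : μ t ≠ ⊤)
    (hfs : IntegrableOn f s μ) (hft : IntegrableOn f t μ)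
    (hlt : ⨍ x in s, f x ∂μ < ⨍ x in t, f x ∂μ) :
    ⨍ x in s, f x ∂μ < ⨍ x in s ∪ t, f x ∂μ := by
  have hmem := average_union_mem_openSegment hd.aedisjoint ht.nullMeasurableSet hs₀ ht₀ hsμ htμ
    hfs hft
  rw [openSegment_eq_Ioo hlt] at hmem
  exact hmem.1

lemma setAverage_le_sub_of_ae_le_on_diff [IsFiniteMeasure μ] (hs : MeasurableSet s)
    (ht : MeasurableSet t) (hst : s ⊆ t) (hs₀ : μ s ≠ 0) (hf : Integrable f μ)
    (hc : ⨍ x in s, f x ∂μ ≤ c) (h : ∀ᵐ x ∂μ, x ∈ t \ s → f x ≤ c) :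
    ⨍ x in t, f x ∂μ ≤ c - μ.real s * (c - ⨍ x in s, f x ∂μ) / μ.real univ := by
  have hsub : Integrable (fun x ↦ f x - c) μ := hf.sub (integrable_const c)
  have hint : ∀ u : Set α, ∫ x in u, (f x - c) ∂μ = μ.real u * (⨍ x in u, f x ∂μ - c) := by
    intro u
    rw [integral_sub hf.integrableOn (integrable_const c), setIntegral_const,
      ← measure_smul_setAverage f (measure_ne_top μ u), smul_eq_mul, smul_eq_mul, mul_sub]
  have hdiff : ∫ x in t \ s, (f x - c) ∂μ ≤ 0 := by
    refine setIntegral_nonpos_ae (ht.diff hs) ?_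
    filter_upwards [h] with x hx hxts
    exact sub_nonpos.2 (hx hxts)
  have hsplit : μ.real t * (⨍ x in t, f x ∂μ - c) ≤ μ.real s * (⨍ x in s, f x ∂μ - c) := by
    rw [← hint, ← hint, ← union_sdiff_cancel hst,
      setIntegral_union disjoint_sdiff_right (ht.diff hs) hsub.integrableOn hsub.integrableOn]
    linarith
  have hs_pos : 0 < μ.real s := ENNReal.toReal_pos hs₀ (measure_ne_top μ s)
  have ht_pos : 0 < μ.real t := hs_pos.trans_le (measureReal_mono hst)
  have htu : μ.real t ≤ μ.real univ := measureReal_mono (subset_univ t)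
  have hneg : ⨍ x in t, f x ∂μ - c ≤ 0 := by nlinarith
  rw [le_sub_iff_add_le, ← le_sub_iff_add_le', div_le_iff₀ (ht_pos.trans_le htu)]
  nlinarith

end MeasureTheory

section lambdaSup

variable {Γ : Type*} [MeasurableSpace Γ] {μ : Measure Γ} {g : Γ → ℝ} {S A : Set Γ}

lemma le_lambdaSup [IsFiniteMeasure μ] {C : ℝ} (hC : 0 ≤ C) (hgC : ∀ x, g x ≤ C)
    (hg : Integrable g μ) (hA : MeasurableSet A) (hSA : S ⊆ A) :
    ⨍ x in A, g x ∂μ ≤ lambdaSup μ g S := by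
  refine le_csSup ⟨C, ?_⟩ ⟨A, hA, hSA, rfl⟩
  rintro _ ⟨B, -, -, rfl⟩
  exact setAverage_le_of_forall_le hC (measure_ne_top μ B) hg.integrableOn fun x _ ↦ hgC x

lemma lambdaSup_le (hS : MeasurableSet S) {r : ℝ}
    (h : ∀ A, MeasurableSet A → S ⊆ A → ⨍ x in A, g x ∂μ ≤ r) : lambdaSup μ g S ≤ r :=
  csSup_le ⟨_, S, hS, subset_rfl, rfl⟩ (by rintro _ ⟨A, hA, hSA, rfl⟩; exact h A hA hSA)

end lambdaSup

theorem lambdaSup_jump_general {Γ : Type*} [MeasurableSpace Γ]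
    (μ : MeasureTheory.Measure Γ) [IsFiniteMeasure μ]
    (g : Γ → ℝ) (hgmeas : Measurable g) (hg0 : ∀ x, 0 < g x) (hg1 : ∀ x, g x < 1)
    (u₀ : Γ → ℝ) (hu₀meas : Measurable u₀)
    (hμpos : 0 < μ {x | 0 < u₀ x})
    (hviol : 0 < μ ({x | u₀ x = 0} ∩ {x | (⨍ y in {y | 0 < u₀ y}, g y ∂μ) < g x})) :
    (⨍ y in {y | 0 < u₀ y}, g y ∂μ) < lambdaSup μ g {x | 0 < u₀ x} ∧
    0 < μ (({x | 0 < u₀ x} ∪ {x | lambdaSup μ g {x | 0 < u₀ x} ≤ g x})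
            \ {x | 0 < u₀ x}) := by
  set S := {x | 0 < u₀ x}
  set lam₀ := ⨍ y in S, g y ∂μ
  set T := {x | u₀ x = 0} ∩ {x | lam₀ < g x}
  have hS : MeasurableSet S := measurableSet_lt measurable_const hu₀meas
  have hT : MeasurableSet T :=
    (hu₀meas (measurableSet_singleton 0)).inter (measurableSet_lt measurable_const hgmeas)
  have hST : Disjoint S T := disjoint_left.2 fun x hxS hxT ↦ hxS.ne' hxT.1
  have hg : Integrable g μ := Integrable.of_bound hgmeas.aestronglyMeasurable 1
    (.of_forall fun x ↦ by rw [Real.norm_of_nonneg (hg0 x).le]; exact (hg1 x).le)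
  have hT_avg : lam₀ < ⨍ x in T, g x ∂μ :=
    lt_setAverage_of_forall_lt hviol.ne' (measure_ne_top μ T) hg.integrableOn fun x hx ↦ hx.2
  have hjump : lam₀ < lambdaSup μ g S :=
    (setAverage_lt_setAverage_union hST hT hμpos.ne' hviol.ne' (measure_ne_top μ S)
      (measure_ne_top μ T) hg.integrableOn hg.integrableOn hT_avg).trans_le
      (le_lambdaSup zero_le_one (fun x ↦ (hg1 x).le) hg (hS.union hT) subset_union_left)
  refine ⟨hjump, ?_⟩
  set Λ := lambdaSup μ g S
  rw [union_sdiff_left, pos_iff_ne_zero]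
  intro hnull
  have hS_pos : 0 < μ.real S := ENNReal.toReal_pos hμpos.ne' (measure_ne_top μ S)
  have hgap : 0 < μ.real S * (Λ - lam₀) / μ.real univ :=
    div_pos (mul_pos hS_pos (sub_pos.2 hjump)) (hS_pos.trans_le (measureReal_mono (subset_univ S)))
  have hΛ_le : Λ ≤ Λ - μ.real S * (Λ - lam₀) / μ.real univ := by
    refine lambdaSup_le hS fun A hA hSA ↦ setAverage_le_sub_of_ae_le_on_diff hS hA hSA hμpos.ne'
      hg hjump.le ?_
    filter_upwards [measure_eq_zero_iff_ae_notMem.1 hnull] with x hx hxA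
    exact le_of_not_ge fun hΛ ↦ hx ⟨hΛ, hxA.2⟩
  linarith

/-- If the first nondegeneracy condition is violated then `Λ > λ₀` and the
maximizing set `A* = {u₀ > 0} ∪ {g ≥ Λ}` strictly enlarges `{u₀ > 0}`. -/
theorem lambdaSup_jump {Γ : Type*} [MeasurableSpace Γ]
    (μ : MeasureTheory.Measure Γ) [IsFiniteMeasure μ]
    (g : Γ → ℝ) (hgmeas : Measurable g) (hg0 : ∀ x, 0 < g x) (hg1 : ∀ x, g x < 1)
    (u₀ : Γ → ℝ) (hu₀meas : Measurable u₀) (hu₀nonneg : ∀ x, 0 ≤ u₀ x)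
    (hμpos : 0 < μ {x | 0 < u₀ x})
    (hviol : 0 < μ ({x | u₀ x = 0} ∩ {x | (⨍ y in {y | 0 < u₀ y}, g y ∂μ) < g x})) :
    (⨍ y in {y | 0 < u₀ y}, g y ∂μ) < lambdaSup μ g {x | 0 < u₀ x} ∧
    0 < μ (({x | 0 < u₀ x} ∪ {x | lambdaSup μ g {x | 0 < u₀ x} ≤ g x})
            \ {x | 0 < u₀ x}) :=
  lambdaSup_jump_general μ g hgmeas hg0 hg1 u₀ hu₀meas hμpos hviol
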